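/- arXiv:0812.1157 — 7 statements merged into one kernel-verified Lean document; each statement's English description precedes it below -/
import Mathlib

section
/- Fix a natural number n. Identify the vertices of the unit cube [0,1]ⁿ with the functions Fin n → ({0,1} ⊆ [0,1]), and order [0,1]ⁿ by the pointwise order. Say a path β : [0,1] → [0,1]ⁿ is 'directed' if it is continuous and each coordinate function t ↦ (β t) i is nondecreasing, and say β is 'skeletal' if for every t, at most one coordinate of β t lies in the open interval (0,1). Then for all vertices ε, ε' of the cube, ε ≤ ε' pointwise if and only if there exists a skeletal directed path β with β 0 = ε and β 1 = ε'. -/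
/-!
If `ε ≤ ε'`, move the coordinates one at a time: during the time window `[i/n, (i+1)/n]`
coordinate `i` runs linearly from `ε i` to `ε' i` while all others are frozen at `0` or `1`,
so at any time only the coordinate being moved can lie strictly between `0` and `1`.
Conversely, comparing a directed path at times `0` and `1` gives `ε ≤ ε'`.
-/

open Set AffineMap

theorem Set.projIcc_mem_Ioo_iff {α : Type*} [LinearOrder α] {a b x : α} (h : a ≤ b) :
    (projIcc a b h x : α) ∈ Ioo a b ↔ x ∈ Ioo a b := by
  constructor
  · intro hx
    refine ⟨lt_of_not_ge fun hxa => ?_, lt_of_not_ge fun hbx => ?_⟩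
    · simp [projIcc_of_le_left h hxa] at hx
    · simp [projIcc_of_right_le h hbx] at hx
  · intro hx
    rwa [projIcc_of_mem h (Ioo_subset_Icc_self hx)]

lemma mem_Ioo_of_lineMap_mem_Ioo {a b c : ℝ} (ha : a = 0 ∨ a = 1) (hb : b = 0 ∨ b = 1)
    (h : lineMap a b c ∈ Ioo (0:ℝ) 1) : c ∈ Ioo (0:ℝ) 1 := by
  rcases ha with rfl | rfl <;> rcases hb with rfl | rfl <;>
    simp [lineMap_apply_ring'] at h ⊢ <;> constructor <;> linarith [h.1, h.2]

lemma Nat.eq_of_sub_cast_mem_Ioo {R : Type*} [CommRing R] [LinearOrder R] [IsStrictOrderedRing R]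
    {s : R} {i j : ℕ} (hi : s - i ∈ Ioo (0:R) 1) (hj : s - j ∈ Ioo (0:R) 1) : i = j := by
  have hij : (i : R) < j + 1 := by linarith [hi.1, hj.2]
  have hji : (j : R) < i + 1 := by linarith [hj.1, hi.2]
  norm_cast at hij hji
  omega

noncomputable def cubeSweep (n : ℕ) (ε ε' : Fin n → ℝ) (t : ℝ) : Fin n → ℝ :=
  fun i => lineMap (ε i) (ε' i) (projIcc (0:ℝ) 1 zero_le_one (n * t - i) : ℝ)

namespace cubeSweep

variable {n : ℕ} {ε ε' : Fin n → ℝ}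

theorem continuous : Continuous (cubeSweep n ε ε') := by
  unfold cubeSweep
  fun_prop

theorem monotone_apply (h : ε ≤ ε') (i : Fin n) : Monotone fun t => cubeSweep n ε ε' t i :=
  (lineMap_mono (h i)).comp <| Subtype.mono_coe _ |>.comp <| monotone_projIcc _ |>.comp
    fun _ _ hst => sub_le_sub_right (mul_le_mul_of_nonneg_left hst n.cast_nonneg) _

theorem apply_mem_Icc (hε : ∀ i, ε i ∈ Icc (0:ℝ) 1) (hε' : ∀ i, ε' i ∈ Icc (0:ℝ) 1) (t : ℝ)
    (i : Fin n) : cubeSweep n ε ε' t i ∈ Icc (0:ℝ) 1 :=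
  (convex_Icc 0 1).lineMap_mem (hε i) (hε' i) (projIcc _ _ _ _).2

theorem zero : cubeSweep n ε ε' 0 = ε := by
  ext i
  simp [cubeSweep, projIcc_of_le_left]

theorem one : cubeSweep n ε ε' 1 = ε' := by
  ext i
  have hi : 1 ≤ (n : ℝ) - i := le_sub_iff_add_le'.2 (by exact_mod_cast i.isLt)
  simp [cubeSweep, projIcc_of_right_le zero_le_one hi]

theorem eq_of_apply_mem_Ioo (hε : ∀ i, ε i = 0 ∨ ε i = 1) (hε' : ∀ i, ε' i = 0 ∨ ε' i = 1)
    {t : ℝ} {i j : Fin n} (hi : cubeSweep n ε ε' t i ∈ Ioo (0:ℝ) 1)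
    (hj : cubeSweep n ε ε' t j ∈ Ioo (0:ℝ) 1) : i = j := by
  have key : ∀ k, cubeSweep n ε ε' t k ∈ Ioo (0:ℝ) 1 → n * t - (k : ℕ) ∈ Ioo (0:ℝ) 1 :=
    fun k hk => (projIcc_mem_Ioo_iff zero_le_one).1 (mem_Ioo_of_lineMap_mem_Ioo (hε k) (hε' k) hk)
  exact Fin.ext (Nat.eq_of_sub_cast_mem_Ioo (key i hi) (key j hj))

end cubeSweep

/-- The order between vertices of the directed unit `n`-cube is realized by
directed paths in the 1-skeleton: two vertices satisfy `ε ≤ ε'` pointwise iff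
they are joined by a continuous, coordinatewise nondecreasing path in the
cube having at most one coordinate in the open interval `(0,1)` at any time. -/
theorem cube_vertex_order_iff_skeletal_dipath (n : ℕ) (ε ε' : Fin n → ℝ)
    (hε : ∀ i, ε i = 0 ∨ ε i = 1) (hε' : ∀ i, ε' i = 0 ∨ ε' i = 1) :
    ε ≤ ε' ↔
      ∃ β : Set.Icc (0:ℝ) 1 → (Fin n → ℝ),
        (∀ t i, β t i ∈ Set.Icc (0:ℝ) 1) ∧
        Continuous β ∧
        (∀ i, Monotone fun t => β t i) ∧
        (∀ t, ∀ i j : Fin n,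
          β t i ∈ Set.Ioo (0:ℝ) 1 → β t j ∈ Set.Ioo (0:ℝ) 1 → i = j) ∧
        β 0 = ε ∧ β 1 = ε' := by
  have vertex_mem_Icc {x : ℝ} (hx : x = 0 ∨ x = 1) : x ∈ Icc (0:ℝ) 1 := by
    rcases hx with rfl | rfl <;> simp
  constructor
  · intro hle
    exact ⟨fun t => cubeSweep n ε ε' t,
      fun t => cubeSweep.apply_mem_Icc (fun i => vertex_mem_Icc (hε i))
        (fun i => vertex_mem_Icc (hε' i)) t,
      cubeSweep.continuous.comp continuous_subtype_val,
      fun i => (cubeSweep.monotone_apply hle i).comp (Subtype.mono_coe _),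
      fun _ _ _ => cubeSweep.eq_of_apply_mem_Ioo hε hε',
      cubeSweep.zero, cubeSweep.one⟩
  · rintro ⟨β, -, -, hmono, -, rfl, rfl⟩ i
    exact hmono i zero_le_one
end

section
/- Fix a natural number n. Say a path α : [0,1] → [0,1]ⁿ is 'directed' if it is continuous and each coordinate function t ↦ (α t) i is nondecreasing, and 'skeletal' if for every t at most one coordinate of α t lies in the open interval (0,1). For x ∈ [0,1]ⁿ define the vertex v(x) ∈ [0,1]ⁿ by v(x) i = 1 if x i = 1 and v(x) i = 0 otherwise. Then for every directed path α on [0,1]ⁿ: (a) v(α 0) ≤ v(α 1) in the pointwise order; (b) there exists a skeletal directed path β with β 0 = v(α 0) and β 1 = v(α 1); and (c) there is a continuous homotopy H : [0,1] × [0,1] → [0,1]ⁿ with H(·,0) = α, H(·,1) = β, such that for every s ∈ [0,1] the path H(·,s) is directed (namely the straight-line homotopy H(t,s) = (1−s)·α t + s·β t, for a suitable such β). -/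
/-!
The approximating path `β` runs through the edges of the cube: it keeps the coordinates that are
already `1` at `α 0`, and raises the coordinates that become `1` only at `α 1` one at a time,
coordinate `k` during `[k/n, (k+1)/n]`. Since at most one coordinate is moving at any time, `β`
is skeletal. Convex combinations of directed paths are directed, so the straight-line homotopy
from `α` to `β` passes through directed paths.
-/

open Set

noncomputable section

def cubeVertex {n : ℕ} (x : Fin n → ℝ) : Fin n → ℝ := fun i => if x i = 1 then 1 else 0

lemma cubeVertex_le_cubeVertex {n : ℕ} {x y : Fin n → ℝ} (h : ∀ i, x i = 1 → y i = 1) :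
    cubeVertex x ≤ cubeVertex y := by
  intro i
  simp only [cubeVertex]
  split_ifs with hx hy <;> simp_all

def stepRamp (n k : ℕ) (t : ℝ) : ℝ := projIcc 0 1 zero_le_one (n * t - k)

section stepRamp

variable {n k : ℕ}

lemma stepRamp_mem_Icc (t : ℝ) : stepRamp n k t ∈ Icc (0 : ℝ) 1 := Subtype.prop _

lemma continuous_stepRamp : Continuous (stepRamp n k) :=
  continuous_subtype_val.comp (continuous_projIcc.comp (by fun_prop))

lemma monotone_stepRamp : Monotone (stepRamp n k) := fun _ _ hst =>
  Subtype.mono_coe _ <|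
    monotone_projIcc zero_le_one (sub_le_sub_right (mul_le_mul_of_nonneg_left hst n.cast_nonneg) _)

lemma stepRamp_zero : stepRamp n k 0 = 0 := by
  simp [stepRamp, projIcc_of_le_left]

lemma stepRamp_one (hk : k < n) : stepRamp n k 1 = 1 := by
  have : (k : ℝ) + 1 ≤ n := by exact_mod_cast hk
  rw [stepRamp, projIcc_of_right_le]
  simp only [mul_one]
  linarith

lemma stepRamp_mem_Ioo {t : ℝ} (h : stepRamp n k t ∈ Ioo (0 : ℝ) 1) :
    k < n * t ∧ n * t < k + 1 := by
  constructor
  · by_contra! hle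
    rw [stepRamp, projIcc_of_le_left _ (by linarith)] at h
    exact lt_irrefl _ h.1
  · by_contra! hle
    rw [stepRamp, projIcc_of_right_le _ (by linarith)] at h
    exact lt_irrefl _ h.2

lemma eq_of_stepRamp_mem_Ioo {l : ℕ} {t : ℝ} (hk : stepRamp n k t ∈ Ioo (0 : ℝ) 1)
    (hl : stepRamp n l t ∈ Ioo (0 : ℝ) 1) : k = l := by
  obtain ⟨hk₁, hk₂⟩ := stepRamp_mem_Ioo hk
  obtain ⟨hl₁, hl₂⟩ := stepRamp_mem_Ioo hl
  have : k < l + 1 := by exact_mod_cast hk₁.trans hl₂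
  have : l < k + 1 := by exact_mod_cast hl₁.trans hk₂
  omega

end stepRamp

def staircase (n : ℕ) (x y : Fin n → ℝ) (t : ℝ) : Fin n → ℝ :=
  fun i => if x i = 1 then 1 else if y i = 1 then stepRamp n i t else 0

section staircase

variable {n : ℕ} {x y : Fin n → ℝ}

lemma staircase_mem_Icc (t : ℝ) (i : Fin n) : staircase n x y t i ∈ Icc (0 : ℝ) 1 := by
  unfold staircase
  split_ifs
  exacts [right_mem_Icc.2 zero_le_one, stepRamp_mem_Icc t, left_mem_Icc.2 zero_le_one]

lemma continuous_staircase : Continuous (staircase n x y) := by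
  refine continuous_pi fun i => ?_
  unfold staircase
  split_ifs
  exacts [continuous_const, continuous_stepRamp, continuous_const]

lemma monotone_staircase (i : Fin n) : Monotone fun t => staircase n x y t i := by
  unfold staircase
  split_ifs
  exacts [monotone_const, monotone_stepRamp, monotone_const]

lemma stepRamp_mem_Ioo_of_staircase {t : ℝ} {i : Fin n}
    (h : staircase n x y t i ∈ Ioo (0 : ℝ) 1) : stepRamp n i t ∈ Ioo (0 : ℝ) 1 := by
  unfold staircase at h
  split_ifs at h
  exacts [absurd h.2 (lt_irrefl 1), h, absurd h.1 (lt_irrefl 0)]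

lemma staircase_skeletal (t : ℝ) (i j : Fin n) (hi : staircase n x y t i ∈ Ioo (0 : ℝ) 1)
    (hj : staircase n x y t j ∈ Ioo (0 : ℝ) 1) : i = j :=
  Fin.ext (eq_of_stepRamp_mem_Ioo (stepRamp_mem_Ioo_of_staircase hi)
    (stepRamp_mem_Ioo_of_staircase hj))

lemma staircase_zero : staircase n x y 0 = cubeVertex x := by
  funext i
  simp only [staircase, cubeVertex, stepRamp_zero, ite_self]

lemma staircase_one (h : ∀ i, x i = 1 → y i = 1) : staircase n x y 1 = cubeVertex y := by
  funext i
  by_cases hx : x i = 1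
  · simp [staircase, cubeVertex, hx, h i hx]
  · simp [staircase, cubeVertex, hx, stepRamp_one i.isLt]

end staircase

lemma Monotone.convex_combination {X : Type*} [Preorder X] {f g : X → ℝ} (hf : Monotone f)
    (hg : Monotone g) {s : ℝ} (hs : s ∈ Icc (0 : ℝ) 1) :
    Monotone fun t => (1 - s) * f t + s * g t :=
  (hf.const_mul (sub_nonneg.2 hs.2)).add (hg.const_mul hs.1)

end

/-- Every directed path on the directed unit `n`-cube admits a skeletal
(cellular) directed approximation between the associated vertices, homotopic
to the original path through directed paths via the straight-line homotopy. -/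
theorem cube_dipath_cellular_approximation (n : ℕ)
    (α : Set.Icc (0:ℝ) 1 → (Fin n → ℝ))
    (hcube : ∀ t i, α t i ∈ Set.Icc (0:ℝ) 1)
    (hcont : Continuous α)
    (hmono : ∀ i, Monotone fun t => α t i) :
    -- (a) the vertex of `α 0` is below the vertex of `α 1`
    ((fun i => if α 0 i = 1 then (1:ℝ) else 0) ≤
      fun i => if α 1 i = 1 then (1:ℝ) else 0) ∧
    -- (b), (c): a skeletal directed path between the vertices, together with
    -- the straight-line homotopy through directed paths
    ∃ β : Set.Icc (0:ℝ) 1 → (Fin n → ℝ),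
      (∀ t i, β t i ∈ Set.Icc (0:ℝ) 1) ∧
      Continuous β ∧
      (∀ i, Monotone fun t => β t i) ∧
      (∀ t, ∀ i j : Fin n,
        β t i ∈ Set.Ioo (0:ℝ) 1 → β t j ∈ Set.Ioo (0:ℝ) 1 → i = j) ∧
      (β 0 = fun i => if α 0 i = 1 then (1:ℝ) else 0) ∧
      (β 1 = fun i => if α 1 i = 1 then (1:ℝ) else 0) ∧
      ∃ H : Set.Icc (0:ℝ) 1 × Set.Icc (0:ℝ) 1 → (Fin n → ℝ),
        Continuous H ∧
        (∀ t, H (t, 0) = α t) ∧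
        (∀ t, H (t, 1) = β t) ∧
        (∀ s, ∀ i, Monotone fun t => H (t, s) i) ∧
        (∀ t s i, H (t, s) i = (1 - (s:ℝ)) * α t i + (s:ℝ) * β t i) := by
  have hvertex : ∀ i, α 0 i = 1 → α 1 i = 1 := fun i h =>
    le_antisymm (hcube 1 i).2 (h.symm.trans_le (hmono i (zero_le_one : (0 : Icc (0:ℝ) 1) ≤ 1)))
  set β : Icc (0:ℝ) 1 → Fin n → ℝ := fun t => staircase n (α 0) (α 1) t
  have hβcont : Continuous β := continuous_staircase.comp continuous_subtype_val
  have hβmono : ∀ i, Monotone fun t => β t i := fun i =>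
    (monotone_staircase i).comp (Subtype.mono_coe _)
  refine ⟨cubeVertex_le_cubeVertex hvertex, β, fun t i => staircase_mem_Icc t i, hβcont,
    hβmono, fun t => staircase_skeletal t, staircase_zero, staircase_one hvertex,
    fun p i => (1 - (p.2:ℝ)) * α p.1 i + p.2 * β p.1 i, by fun_prop, ?_, ?_,
    fun s i => (hmono i).convex_combination (hβmono i) s.2, fun _ _ _ => rfl⟩
  all_goals intro t; funext i; simp
end

section
/- Let S₁ and S₂ be types and let a, b, c, d : S₂ → S₁ be functions. Let ∂ : (S₂ →₀ ℤ) → (S₁ →₀ ℤ) be the ℤ-linear map determined on generators by sending the basis element of σ ∈ S₂ to (single (a σ) 1) + (single (b σ) 1) − (single (c σ) 1) − (single (d σ) 1), where single x 1 denotes the finitely supported function taking value 1 at x and 0 elsewhere. If z : S₁ →₀ ℤ lies in the range of ∂ and every coefficient of z is nonnegative, then z = 0. -/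
/-! The total coefficient sum `Finsupp.degree` kills every `∂ σ`, which has two coefficients `+1`
and two `-1`, hence every boundary. A 1-chain with nonnegative coefficients and total sum zero
vanishes. -/

namespace Finsupp

theorem degree_eq_zero_iff_of_nonneg {σ R : Type*} [AddCommMonoid R] [PartialOrder R]
    [IsOrderedAddMonoid R] {f : σ →₀ R} (hf : ∀ s, 0 ≤ f s) : degree f = 0 ↔ f = 0 := by
  rw [degree_apply, Finset.sum_eq_zero_iff_of_nonneg fun s _ ↦ hf s]
  refine ⟨fun h ↦ ext fun s ↦ ?_, fun h s _ ↦ by simp [h]⟩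
  by_contra hs
  exact hs (h s (mem_support_iff.mpr hs))

theorem degree_comp_eq_zero_of_degree_single_one {α β : Type*} {D : (β →₀ ℤ) →+ (α →₀ ℤ)}
    (hD : ∀ b, degree (D (single b 1)) = 0) : degree.comp D = 0 :=
  addHom_ext' fun b ↦ AddMonoidHom.ext_int (by simpa using hD b)

end Finsupp

/-- If a boundary (an element of the range of the cubical differential
`∂ σ = a σ + b σ − c σ − d σ`) has all coefficients nonnegative, it is zero. -/
theorem boundary_nonneg_eq_zero {S₁ S₂ : Type*}
    (a b c d : S₂ → S₁)
    (D : (S₂ →₀ ℤ) →ₗ[ℤ] (S₁ →₀ ℤ))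
    (hD : ∀ σ : S₂, D (Finsupp.single σ 1) =
      Finsupp.single (a σ) 1 + Finsupp.single (b σ) 1
        - Finsupp.single (c σ) 1 - Finsupp.single (d σ) 1)
    (z : S₁ →₀ ℤ) (hz : z ∈ Set.range D) (hpos : ∀ x : S₁, 0 ≤ z x) :
    z = 0 := by
  obtain ⟨w, rfl⟩ := hz
  have hboundary : Finsupp.degree.comp D.toAddMonoidHom = 0 :=
    Finsupp.degree_comp_eq_zero_of_degree_single_one fun σ ↦ by simp [hD σ]
  exact (Finsupp.degree_eq_zero_iff_of_nonneg hpos).mp (DFunLike.congr_fun hboundary w)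
end

section
/- Work in AddCircle ℝ 1 (the circle ℝ/ℤ) with projection p : ℝ → AddCircle ℝ 1. Call a loop γ : [0,1] → AddCircle ℝ 1 with γ 0 = γ 1 = 0 'directed' if there exists a continuous nondecreasing γ̃ : [0,1] → ℝ with γ̃ 0 = 0 and γ = p ∘ γ̃ (necessarily γ̃ 1 ∈ ℤ); define deg γ := γ̃ 1. Call two directed loops γ, γ' 'dihomotopic' if there is a continuous H : [0,1] × [0,1] → AddCircle ℝ 1 with H(·,0) = γ, H(·,1) = γ', H(0,s) = H(1,s) = 0 for all s, and H(·,s) a directed loop for every s. Then: deg is well defined (independent of the choice of lift), dihomotopy is an equivalence relation on directed loops, deg γ is a nonnegative integer for every directed loop γ, two directed loops are dihomotopic if and only if they have the same degree, and every natural number is the degree of some directed loop. Hence deg induces a bijection from the set of dihomotopy classes of directed loops onto ℕ. -/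
/-!
The endpoint of a nondecreasing lift of a loop at `0` is an integer, nonnegative by monotonicity.
Two lifts with the same endpoint are joined by the straight-line homotopy, whose slices are again
nondecreasing lifts. Conversely, if two loops are pointwise closer than `1/2` then, by the
intermediate value theorem, the difference of their lifts never reaches `±1/2`, so their integer
endpoints agree; along a dihomotopy, uniform continuity makes the degree locally constant in the
homotopy parameter, hence constant on the connected interval.
-/

/-- `g` is a continuous nondecreasing lift, starting at `0`, of the loop `γ`
on the circle `ℝ/ℤ` based at `0`. The degree of `γ` is `g 1`. -/
def IsDiLift (γ : Set.Icc (0:ℝ) 1 → AddCircle (1:ℝ))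
    (g : Set.Icc (0:ℝ) 1 → ℝ) : Prop :=
  Continuous g ∧ Monotone g ∧ g 0 = 0 ∧
    (∀ t, γ t = ((g t : ℝ) : AddCircle (1:ℝ))) ∧ γ 1 = 0

/-- A directed loop on the circle `ℝ/ℤ`, based at `0`. -/
def IsDirectedLoop (γ : Set.Icc (0:ℝ) 1 → AddCircle (1:ℝ)) : Prop :=
  ∃ g, IsDiLift γ g

/-- Two directed loops are dihomotopic if they are homotopic relative to
endpoints through directed loops. -/
def Dihomotopic (γ γ' : Set.Icc (0:ℝ) 1 → AddCircle (1:ℝ)) : Prop :=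
  ∃ H : Set.Icc (0:ℝ) 1 × Set.Icc (0:ℝ) 1 → AddCircle (1:ℝ),
    Continuous H ∧
    (∀ t, H (t, 0) = γ t) ∧ (∀ t, H (t, 1) = γ' t) ∧
    (∀ s, H (0, s) = 0) ∧ (∀ s, H (1, s) = 0) ∧
    ∀ s, IsDirectedLoop fun t => H (t, s)

open Set

lemma abs_lt_half_of_forall_norm_coe_lt_half {X : Type*} [TopologicalSpace X]
    [PreconnectedSpace X] {f : X → ℝ} (hf : Continuous f) {x₀ : X} (h₀ : f x₀ = 0)
    (h : ∀ x, ‖(f x : AddCircle (1:ℝ))‖ < 1 / 2) (x : X) : |f x| < 1 / 2 := by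
  have norm_half : ‖((1 / 2 : ℝ) : AddCircle (1:ℝ))‖ = 1 / 2 := by
    simpa using AddCircle.norm_half_period_eq (1:ℝ)
  by_contra! hx
  rcases le_abs'.mp hx with hneg | hpos
  · obtain ⟨y, hy⟩ := intermediate_value_univ x x₀ hf
      (show -(1 / 2) ∈ Icc (f x) (f x₀) from ⟨hneg, by rw [h₀]; norm_num⟩)
    have := h y
    rw [hy, AddCircle.coe_neg, norm_neg, norm_half] at this
    exact this.false
  · obtain ⟨y, hy⟩ := intermediate_value_univ x₀ x hf
      (show 1 / 2 ∈ Icc (f x₀) (f x) from ⟨by rw [h₀]; norm_num, hpos⟩)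
    have := h y
    rw [hy, norm_half] at this
    exact this.false

lemma isDiLift_coe_comp {h : Icc (0:ℝ) 1 → ℝ} (hc : Continuous h) (hm : Monotone h)
    (h₀ : h 0 = 0) (h₁ : ((h 1 : ℝ) : AddCircle (1:ℝ)) = 0) :
    IsDiLift (fun t => (h t : AddCircle (1:ℝ))) h :=
  ⟨hc, hm, h₀, fun _ => rfl, h₁⟩

namespace IsDiLift

variable {γ γ' : Icc (0:ℝ) 1 → AddCircle (1:ℝ)} {g g' : Icc (0:ℝ) 1 → ℝ}

lemma coe_apply_one (hg : IsDiLift γ g) : ((g 1 : ℝ) : AddCircle (1:ℝ)) = 0 :=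
  hg.2.2.2.1 1 ▸ hg.2.2.2.2

lemma exists_nat_eq (hg : IsDiLift γ g) : ∃ m : ℕ, g 1 = m := by
  obtain ⟨k, hk⟩ := (AddCircle.coe_eq_zero_iff 1).mp hg.coe_apply_one
  have hnonneg : (0:ℝ) ≤ k := by
    simpa [hg.2.2.1, ← hk] using hg.2.1 (zero_le_one : (0 : Icc (0:ℝ) 1) ≤ 1)
  lift k to ℕ using (by exact_mod_cast hnonneg)
  exact ⟨k, by simp [← hk]⟩

lemma apply_one_eq_of_forall_norm_sub_lt_half (hg : IsDiLift γ g) (hg' : IsDiLift γ' g')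
    (h : ∀ t, ‖γ t - γ' t‖ < 1 / 2) : g 1 = g' 1 := by
  obtain ⟨m, hm⟩ := hg.exists_nat_eq
  obtain ⟨m', hm'⟩ := hg'.exists_nat_eq
  have hclose : |g 1 - g' 1| < 1 / 2 := by
    refine abs_lt_half_of_forall_norm_coe_lt_half (hg.1.sub hg'.1) (x₀ := 0)
      (by simp [hg.2.2.1, hg'.2.2.1]) (fun t => ?_) 1
    rw [Pi.sub_apply, AddCircle.coe_sub, ← hg.2.2.2.1, ← hg'.2.2.2.1]
    exact h t
  rw [hm, hm'] at hclose ⊢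
  have hlt : |(m : ℤ) - m'| < 1 := by
    rw [← Int.cast_lt (R := ℝ)]; push_cast; linarith
  have : m = m' := by have := abs_lt.mp hlt; omega
  rw [this]

lemma apply_one_unique (hg : IsDiLift γ g) (hg' : IsDiLift γ g') : g 1 = g' 1 :=
  hg.apply_one_eq_of_forall_norm_sub_lt_half hg' (by simp)

lemma lineMap (hg : IsDiLift γ g) (hg' : IsDiLift γ' g') (h : g 1 = g' 1) (s : Icc (0:ℝ) 1) :
    IsDiLift (fun t => (((1 - s) * g t + s * g' t : ℝ) : AddCircle (1:ℝ)))
      (fun t => (1 - s) * g t + s * g' t) := by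
  refine isDiLift_coe_comp ((continuous_const.mul hg.1).add (continuous_const.mul hg'.1))
    ((hg.2.1.const_mul (sub_nonneg.mpr s.2.2)).add (hg'.2.1.const_mul s.2.1))
    (by simp [hg.2.2.1, hg'.2.2.1]) ?_
  rw [← h, ← add_mul, sub_add_cancel, one_mul]
  exact hg.coe_apply_one

lemma dihomotopic (hg : IsDiLift γ g) (hg' : IsDiLift γ' g') (h : g 1 = g' 1) :
    Dihomotopic γ γ' := by
  refine ⟨fun q => (((1 - q.2) * g q.1 + q.2 * g' q.1 : ℝ) : AddCircle (1:ℝ)), ?_,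
    fun t => by simp [hg.2.2.2.1], fun t => by simp [hg'.2.2.2.1],
    fun s => by simp [hg.2.2.1, hg'.2.2.1], fun s => (hg.lineMap hg' h s).2.2.2.2,
    fun s => ⟨_, hg.lineMap hg' h s⟩⟩
  have := hg.1
  have := hg'.1
  fun_prop

end IsDiLift

namespace Dihomotopic

variable {γ γ' : Icc (0:ℝ) 1 → AddCircle (1:ℝ)}

lemma isDirectedLoop_left (hd : Dihomotopic γ γ') : IsDirectedLoop γ := by
  obtain ⟨H, -, h₀, -, -, -, hs⟩ := hd
  exact funext h₀ ▸ hs 0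

lemma isDirectedLoop_right (hd : Dihomotopic γ γ') : IsDirectedLoop γ' := by
  obtain ⟨H, -, -, h₁, -, -, hs⟩ := hd
  exact funext h₁ ▸ hs 1

lemma apply_one_eq {g g' : Icc (0:ℝ) 1 → ℝ} (hd : Dihomotopic γ γ') (hg : IsDiLift γ g)
    (hg' : IsDiLift γ' g') : g 1 = g' 1 := by
  obtain ⟨H, hHc, h₀, h₁, -, -, hs⟩ := hd
  choose L hL using hs
  obtain ⟨δ, hδ, hHδ⟩ := Metric.uniformContinuous_iff.mp
    (CompactSpace.uniformContinuous_of_continuous hHc) (1 / 2) one_half_pos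
  have hloc : IsLocallyConstant fun s => L s 1 := by
    refine (IsLocallyConstant.iff_eventually_eq _).mpr fun s => ?_
    refine Metric.eventually_nhds_iff.mpr ⟨δ, hδ, fun s' hs' => ?_⟩
    refine (hL s').apply_one_eq_of_forall_norm_sub_lt_half (hL s) fun t => ?_
    rw [← dist_eq_norm]
    exact hHδ (by simpa [Prod.dist_eq] using hs')
  calc g 1 = L 0 1 := hg.apply_one_unique (funext h₀ ▸ hL 0)
    _ = L 1 1 := hloc.apply_eq_of_preconnectedSpace 0 1
    _ = g' 1 := (hL 1).apply_one_unique (funext h₁ ▸ hg')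

end Dihomotopic

lemma dihomotopic_iff_apply_one_eq {γ γ' : Icc (0:ℝ) 1 → AddCircle (1:ℝ)}
    {g g' : Icc (0:ℝ) 1 → ℝ} (hg : IsDiLift γ g) (hg' : IsDiLift γ' g') :
    Dihomotopic γ γ' ↔ g 1 = g' 1 :=
  ⟨fun hd => hd.apply_one_eq hg hg', hg.dihomotopic hg'⟩

lemma isDiLift_natCast_mul (m : ℕ) :
    IsDiLift (fun t => ((m * t : ℝ) : AddCircle (1:ℝ))) fun t => m * t := by
  refine isDiLift_coe_comp (by fun_prop) (fun a b hab => by gcongr) (by simp) ?_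
  simpa using (AddCircle.coe_eq_zero_iff 1).mpr ⟨m, by simp⟩

/-- The fundamental monoid of the directed circle: the degree is well defined,
dihomotopy is an equivalence relation on directed loops, degrees are
nonnegative integers, two directed loops are dihomotopic iff they have equal
degrees, and every natural number is realized as a degree.  Hence the degree
induces a bijection from dihomotopy classes of directed loops onto `ℕ`. -/
theorem directed_circle_fundamental_monoid :
    -- degree is well defined
    (∀ γ g g', IsDiLift γ g → IsDiLift γ g' → g 1 = g' 1) ∧
    -- dihomotopy is reflexive on directed loops, symmetric, and transitive
    (∀ γ, IsDirectedLoop γ → Dihomotopic γ γ) ∧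
    (∀ γ γ', Dihomotopic γ γ' → Dihomotopic γ' γ) ∧
    (∀ γ₁ γ₂ γ₃, Dihomotopic γ₁ γ₂ → Dihomotopic γ₂ γ₃ → Dihomotopic γ₁ γ₃) ∧
    -- the degree of a directed loop is a nonnegative integer
    (∀ γ g, IsDiLift γ g → ∃ m : ℕ, g 1 = (m : ℝ)) ∧
    -- dihomotopic iff equal degree
    (∀ γ γ' g g', IsDiLift γ g → IsDiLift γ' g' →
      (Dihomotopic γ γ' ↔ g 1 = g' 1)) ∧
    -- every natural number is a degree
    (∀ m : ℕ, ∃ γ g, IsDiLift γ g ∧ g 1 = (m : ℝ)) := by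
  refine ⟨fun _ _ _ hg hg' => hg.apply_one_unique hg', ?refl, ?symm, ?trans,
    fun _ _ hg => hg.exists_nat_eq, fun _ _ _ _ => dihomotopic_iff_apply_one_eq,
    fun m => ⟨_, _, isDiLift_natCast_mul m, by simp⟩⟩
  case refl =>
    rintro γ ⟨g, hg⟩
    exact hg.dihomotopic hg rfl
  case symm =>
    intro γ γ' hd
    obtain ⟨g, hg⟩ := hd.isDirectedLoop_left
    obtain ⟨g', hg'⟩ := hd.isDirectedLoop_right
    exact hg'.dihomotopic hg (hd.apply_one_eq hg hg').symm
  case trans =>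
    intro γ₁ γ₂ γ₃ h₁₂ h₂₃
    obtain ⟨g₁, hg₁⟩ := h₁₂.isDirectedLoop_left
    obtain ⟨g₂, hg₂⟩ := h₁₂.isDirectedLoop_right
    obtain ⟨g₃, hg₃⟩ := h₂₃.isDirectedLoop_right
    exact hg₁.dihomotopic hg₃ ((h₁₂.apply_one_eq hg₁ hg₂).trans (h₂₃.apply_one_eq hg₂ hg₃))
end

section
/- Let γ̃ : [0,1] → ℝ be a continuous nondecreasing function with γ̃ 1 − γ̃ 0 ∈ ℤ, and let p : ℝ → AddCircle ℝ 1 be the projection, so that γ = p ∘ γ̃ is a loop in AddCircle ℝ 1 (γ 0 = γ 1). If γ is homotopic relative to {0,1} to the constant loop at γ 0, then γ̃ is constant; in particular γ is constant. -/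
/-!
By homotopy lifting along the covering `ℝ → ℝ/ℤ`, the lift `γ̃` of a loop that is
null-homotopic relative to its endpoints is homotopic relative to its endpoints to the constant
path at `γ̃ 0`, so `γ̃ 1 = γ̃ 0`. A monotone function taking the same value at both ends of
`[0, 1]` is constant.
-/

open unitInterval

theorem IsCoveringMap.apply_one_eq_apply_zero_of_homotopicRel_const
    {E X : Type*} [TopologicalSpace E] [TopologicalSpace X] {p : E → X}
    (cov : IsCoveringMap p) (Γ : C(I, E))
    (h : (ContinuousMap.comp ⟨p, cov.continuous⟩ Γ).HomotopicRel
      (.const I (p (Γ 0))) {0, 1}) :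
    Γ 1 = Γ 0 :=
  ((cov.homotopicRel_iff_comp (f₀ := Γ) (f₁ := .const I (Γ 0)) (S := {0, 1})
    ⟨0, .inl rfl, rfl⟩).mpr h).some.fst_eq_snd (.inr rfl)

theorem ContinuousMap.homotopicRel_const_of_square {Y : Type*} [TopologicalSpace Y]
    (γ : C(I, Y)) (H : I × I → Y) (hH : Continuous H)
    (h_bot : ∀ t, H (t, 0) = γ t) (h_top : ∀ t, H (t, 1) = γ 0)
    (h_left : ∀ s, H (0, s) = γ 0) (h_right : ∀ s, H (1, s) = γ 1) :
    γ.HomotopicRel (.const I (γ 0)) {0, 1} :=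
  ⟨{ toFun := fun st ↦ H (st.2, st.1)
     continuous_toFun := hH.comp continuous_swap
     map_zero_left := h_bot
     map_one_left := h_top
     prop' := by
       rintro s t (rfl | rfl)
       · exact h_left s
       · exact h_right s }⟩

theorem directed_loop_nullhomotopic_constant_general
    (g : Set.Icc (0:ℝ) 1 → ℝ)
    (hgc : Continuous g) (hgm : Monotone g)
    (hnull : ∃ H : Set.Icc (0:ℝ) 1 × Set.Icc (0:ℝ) 1 → AddCircle (1:ℝ),
      Continuous H ∧
      (∀ t, H (t, 0) = ((g t : ℝ) : AddCircle (1:ℝ))) ∧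
      (∀ t, H (t, 1) = ((g 0 : ℝ) : AddCircle (1:ℝ))) ∧
      (∀ s, H (0, s) = ((g 0 : ℝ) : AddCircle (1:ℝ))) ∧
      (∀ s, H (1, s) = ((g 1 : ℝ) : AddCircle (1:ℝ)))) :
    ∀ t, g t = g 0 := by
  obtain ⟨H, hH, h_bot, h_top, h_left, h_right⟩ := hnull
  have hloop : g 1 = g 0 :=
    (AddCircle.isCoveringMap_coe (1 : ℝ)).apply_one_eq_apply_zero_of_homotopicRel_const
      ⟨g, hgc⟩ (ContinuousMap.homotopicRel_const_of_square _ H hH h_bot h_top h_left h_right)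
  exact fun t ↦ le_antisymm (hloop ▸ hgm le_one') (hgm nonneg')

/-- A directed loop on the circle `ℝ/ℤ` (a loop admitting a continuous
nondecreasing lift to `ℝ`) that is null-homotopic relative to endpoints is
constant; indeed its lift is constant. -/
theorem directed_loop_nullhomotopic_constant
    (g : Set.Icc (0:ℝ) 1 → ℝ)
    (hgc : Continuous g) (hgm : Monotone g)
    (hint : ∃ k : ℤ, g 1 - g 0 = (k : ℝ))
    (hnull : ∃ H : Set.Icc (0:ℝ) 1 × Set.Icc (0:ℝ) 1 → AddCircle (1:ℝ),
      Continuous H ∧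
      (∀ t, H (t, 0) = ((g t : ℝ) : AddCircle (1:ℝ))) ∧
      (∀ t, H (t, 1) = ((g 0 : ℝ) : AddCircle (1:ℝ))) ∧
      (∀ s, H (0, s) = ((g 0 : ℝ) : AddCircle (1:ℝ))) ∧
      (∀ s, H (1, s) = ((g 1 : ℝ) : AddCircle (1:ℝ)))) :
    ∀ t, g t = g 0 :=
  directed_loop_nullhomotopic_constant_general g hgc hgm hnull
end

section
/- For z, z' ∈ ℂ and a subset V ⊆ ℂ, write z ⇝_V z' if there exist continuous nondecreasing functions α, β : [0,1] → ℝ such that the path t ↦ α t · exp(β t · i) takes values in V, starts at z, and ends at z'. Then for every open neighborhood V of 0 in ℂ there exist z, z' ∈ V with z ≠ z', z ⇝_V z', and z' ⇝_V z. -/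
/-!
Every open neighbourhood of `0` contains a circle `|z| = r`. Along that circle the modulus can
stay constant while the argument increases, so `r ⇝ -r` through the angles `[0, π]` and
`-r ⇝ r` through `[π, 2π]`: winding once around the origin returns to the start.
-/

/-- `z ⇝_V z'`: there exist continuous nondecreasing `α, β : [0,1] → ℝ` such
that `t ↦ α t · e^{i β t}` is a path from `z` to `z'` contained in `V`. -/
def DiReach (V : Set ℂ) (z z' : ℂ) : Prop :=
  ∃ α β : Set.Icc (0:ℝ) 1 → ℝ,
    Continuous α ∧ Continuous β ∧ Monotone α ∧ Monotone β ∧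
    (∀ t, ((α t : ℂ) * Complex.exp ((β t : ℂ) * Complex.I)) ∈ V) ∧
    (α 0 : ℂ) * Complex.exp ((β 0 : ℂ) * Complex.I) = z ∧
    (α 1 : ℂ) * Complex.exp ((β 1 : ℂ) * Complex.I) = z'

open Complex

lemma ofReal_mul_exp_mem_ball {r ε : ℝ} (hr : |r| < ε) (θ : ℝ) :
    (r : ℂ) * exp (θ * I) ∈ Metric.ball (0 : ℂ) ε := by
  simpa [norm_mul, norm_exp_ofReal_mul_I] using hr

section Circle

variable {V : Set ℂ} {r : ℝ}

lemma diReach_of_forall_mem_circle (hV : ∀ θ : ℝ, (r : ℂ) * exp (θ * I) ∈ V) {θ₀ θ₁ : ℝ}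
    (h : θ₀ ≤ θ₁) :
    DiReach V (r * exp (θ₀ * I)) (r * exp (θ₁ * I)) := by
  refine ⟨fun _ => r, fun t => θ₀ + (θ₁ - θ₀) * t, continuous_const, by fun_prop,
    monotone_const, ((Subtype.mono_coe _).const_mul (sub_nonneg.mpr h)).const_add θ₀,
    fun _ => hV _, by simp, by simp⟩

lemma diReach_ofReal_neg_of_forall_mem_circle (hV : ∀ θ : ℝ, (r : ℂ) * exp (θ * I) ∈ V) :
    DiReach V r (-r) := by
  simpa [exp_pi_mul_I] using diReach_of_forall_mem_circle hV Real.pi_pos.le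

lemma diReach_neg_ofReal_of_forall_mem_circle (hV : ∀ θ : ℝ, (r : ℂ) * exp (θ * I) ∈ V) :
    DiReach V (-r) r := by
  simpa [exp_pi_mul_I, exp_two_pi_mul_I] using
    diReach_of_forall_mem_circle hV (θ₀ := Real.pi) (θ₁ := 2 * Real.pi)
      (by linarith [Real.pi_pos])

end Circle

/-- The origin is a vortex of the directed complex plane: on every open
neighborhood of `0`, the reachability preorder fails to be antisymmetric. -/
theorem zero_is_vortex_of_directed_complex_plane :
    ∀ V : Set ℂ, IsOpen V → (0 : ℂ) ∈ V →
      ∃ z z' : ℂ, z ∈ V ∧ z' ∈ V ∧ z ≠ z' ∧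
        DiReach V z z' ∧ DiReach V z' z := by
  intro V hV h0
  obtain ⟨ε, hε, hball⟩ := Metric.isOpen_iff.mp hV 0 h0
  have hr : 0 < ε / 2 := by positivity
  have hcircle : ∀ θ : ℝ, ((ε / 2 : ℝ) : ℂ) * exp (θ * I) ∈ V := fun θ =>
    hball (ofReal_mul_exp_mem_ball (by rw [abs_of_pos hr]; linarith) θ)
  refine ⟨(ε / 2 : ℝ), -(ε / 2 : ℝ), by simpa using hcircle 0, by simpa using hcircle Real.pi,
    ?_, diReach_ofReal_neg_of_forall_mem_circle hcircle,
    diReach_neg_ofReal_of_forall_mem_circle hcircle⟩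
  exact_mod_cast (neg_lt_self hr).ne'
end

section
/- For points z, z' of the unit circle 𝕊 = {w ∈ ℂ : |w| = 1} and a subset V ⊆ 𝕊, write z ≤_V z' if there exist real numbers θ ≤ θ' with z = exp(θ·i), z' = exp(θ'·i), and {exp(t·i) : t ∈ [θ,θ']} ⊆ V. Then for every point z₀ ∈ 𝕊 there exists a subset V ⊆ 𝕊, open in the subspace topology of 𝕊 and containing z₀, such that the relation ≤_V is antisymmetric (i.e., z ≤_V z' and z' ≤_V z imply z = z'). -/
/-!
If `V` misses a point of the circle, every arc in `V` has angular length `< 2π`. Going from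
`z` to `z'` and back along arcs in `V` and lifting the second arc by a multiple of `2π` gives a
single arc in `V` from an angle `θ` of `z` to another angle `θ + 2πk` of `z`; then `k ≤ 0`, which
squeezes the first arc to a point. The circle minus `-z₀` is such a `V` around `z₀`.
-/

/-- `z ≤_V z'`: there is a counterclockwise arc from `z` to `z'` contained in
`V ⊆ 𝕊`. -/
def ArcLe (V : Set ℂ) (z z' : ℂ) : Prop :=
  ∃ θ θ' : ℝ, θ ≤ θ' ∧
    z = Complex.exp ((θ : ℂ) * Complex.I) ∧
    z' = Complex.exp ((θ' : ℂ) * Complex.I) ∧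
    ∀ t ∈ Set.Icc θ θ', Complex.exp ((t : ℂ) * Complex.I) ∈ V

open Complex Real Set

lemma exp_ofReal_mul_I_eq_iff {x y : ℝ} :
    exp (x * I) = exp (y * I) ↔ ∃ m : ℤ, x = y + m * (2 * π) := by
  rw [← Circle.coe_exp, ← Circle.coe_exp, Circle.coe_inj, Circle.exp_eq_exp]

lemma exp_ofReal_add_int_mul_two_pi_mul_I (t : ℝ) (m : ℤ) :
    exp (↑(t + m * (2 * π)) * I) = exp (t * I) :=
  exp_ofReal_mul_I_eq_iff.2 ⟨m, rfl⟩

lemma exp_arg_mul_I_of_norm_eq_one {p : ℂ} (hp : ‖p‖ = 1) : exp (arg p * I) = p := by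
  simpa [hp] using norm_mul_exp_arg_mul_I p

lemma exists_mem_Icc_exp_ofReal_mul_I_eq {θ θ' : ℝ} (h : θ + 2 * π ≤ θ') (φ : ℝ) :
    ∃ t ∈ Icc θ θ', exp (t * I) = exp (φ * I) := by
  refine ⟨toIcoMod two_pi_pos θ φ, ?_, ?_⟩
  · obtain ⟨hθ, hlt⟩ := toIcoMod_mem_Ico two_pi_pos θ φ
    exact ⟨hθ, by linarith⟩
  · exact exp_ofReal_mul_I_eq_iff.2
      ⟨-toIcoDiv two_pi_pos θ φ, by
        push_cast; linarith [toIcoMod_sub_self_eq_mul two_pi_pos θ φ]⟩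

def ArcIn (V : Set ℂ) (θ θ' : ℝ) : Prop :=
  ∀ t ∈ Icc θ θ', exp (t * I) ∈ V

namespace ArcIn

variable {V : Set ℂ} {a b c : ℝ}

lemma append_shift (m : ℤ) (h₁ : ArcIn V a b)
    (h₂ : ArcIn V (b + m * (2 * π)) (c + m * (2 * π))) : ArcIn V a c := by
  intro t ⟨hat, htc⟩
  rcases le_total t b with htb | hbt
  · exact h₁ t ⟨hat, htb⟩
  · rw [← exp_ofReal_add_int_mul_two_pi_mul_I t m]
    exact h₂ _ ⟨by linarith, by linarith⟩

lemma lt_add_two_pi {p : ℂ} (hp : ‖p‖ = 1) (hpV : p ∉ V) (h : ArcIn V a b) :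
    b < a + 2 * π := by
  by_contra! hlong
  obtain ⟨t, ht, hexp⟩ := exists_mem_Icc_exp_ofReal_mul_I_eq hlong (arg p)
  exact hpV (exp_arg_mul_I_of_norm_eq_one hp ▸ hexp ▸ h t ht)

end ArcIn

lemma ArcLe.antisymm_of_notMem {V : Set ℂ} {p z z' : ℂ} (hp : ‖p‖ = 1) (hpV : p ∉ V)
    (h : ArcLe V z z') (h' : ArcLe V z' z) : z = z' := by
  obtain ⟨θ₁, θ₂, h₁₂, rfl, rfl, harc⟩ := h
  obtain ⟨θ₃, θ₄, h₃₄, hθ₃, hθ₄, harc'⟩ := h'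
  obtain ⟨m, rfl⟩ := exp_ofReal_mul_I_eq_iff.1 hθ₃.symm
  obtain ⟨n, rfl⟩ := exp_ofReal_mul_I_eq_iff.1 hθ₄.symm
  -- Shifted by `-2πm`, the return arc `[θ₂ + 2πm, θ₁ + 2πn]` continues the first one to `[θ₁, c]`.
  set k := n - m
  set c := θ₁ + k * (2 * π)
  have hc : θ₁ + n * (2 * π) = c + m * (2 * π) := by push_cast [c, k]; ring
  have hloop : ArcIn V θ₁ c := ArcIn.append_shift m harc (hc ▸ harc')
  have hk : (k : ℝ) ≤ 0 := by
    have : (k : ℝ) < 1 := by nlinarith [hloop.lt_add_two_pi hp hpV, two_pi_pos]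
    have : k < 1 := by exact_mod_cast this
    exact_mod_cast (by omega : k ≤ 0)
  have hc_le : c ≤ θ₁ := by nlinarith [two_pi_pos]
  rw [le_antisymm h₁₂ (by linarith)]

/-- The directed circle is vortex-free: every point of the unit circle has a
neighborhood, open in the subspace topology of the circle, on which the arc
preorder is antisymmetric. -/
theorem directed_circle_vortex_free :
    ∀ z₀ : ℂ, ‖z₀‖ = 1 →
      ∃ V : Set ℂ, V ⊆ {w : ℂ | ‖w‖ = 1} ∧
        (∃ U : Set ℂ, IsOpen U ∧ V = U ∩ {w : ℂ | ‖w‖ = 1}) ∧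
        z₀ ∈ V ∧
        ∀ z z' : ℂ, ArcLe V z z' → ArcLe V z' z → z = z' := by
  intro z₀ hz₀
  have hz₀_ne : z₀ ≠ 0 := by rintro rfl; simp at hz₀
  refine ⟨{-z₀}ᶜ ∩ {w : ℂ | ‖w‖ = 1}, inter_subset_right,
    ⟨{-z₀}ᶜ, isOpen_compl_singleton, rfl⟩, ⟨(neg_ne_self.2 hz₀_ne).symm, hz₀⟩, ?_⟩
  intro z z'
  exact ArcLe.antisymm_of_notMem (p := -z₀) (by rwa [norm_neg]) (fun h ↦ h.1 rfl)
end
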